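/- Let d ≥ 1, let h, h' > 0 and set h₀ := (√h + √h')². Let u : ℝ^d → [0,1] be measurable and Lebesgue integrable. Then ∫_{ℝ^d} u dx − ∫_{ℝ^d} u·(G_{h₀} ⋆ u) dx ≤ ( ∫_{ℝ^d} u dx − ∫_{ℝ^d} u·(G_h ⋆ u) dx ) + ( ∫_{ℝ^d} u dx − ∫_{ℝ^d} u·(G_{h'} ⋆ u) dx ). Equivalently, in terms of E_h(u) = (1/√h)·∫ (1−u)·(G_h ⋆ u) dx, one has √h₀·E_{h₀}(u) ≤ √h·E_h(u) + √h'·E_{h'}(u); in particular E_{h₀}(u) ≤ E_h(u) whenever h₀/h is the square of a positive integer. -/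

import Mathlib

/-!
Let `A(v) = ∫ u(x) u(x - v) dx` be the autocorrelation of `u`. Fubini and the substitution
`z = √t • w` give `∫ u (G_t ⋆ u) = ∫ G_1(w) A(√t • w) dw`. As `u` takes values in `[0,1]`, the
pointwise inequality `ab + bc ≤ b + ac` for `a = u(x)`, `b = u(x - v)`, `c = u(x - v - w)`,
integrated in `x`, gives `A(v) + A(w) ≤ ∫ u + A(v + w)`. Evaluating at `√h • w` and `√h' • w` and
integrating against the probability density `G_1` proves the claim, since `√h₀ = √h + √h'`.
-/

open MeasureTheory

/-- The Gaussian heat kernel `G_h(z) = (2πh)^{-d/2} exp(-|z|²/(2h))` on `ℝ^d`. -/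
noncomputable def gauss (d : ℕ) (h : ℝ) (z : EuclideanSpace ℝ (Fin d)) : ℝ :=
  (2 * Real.pi * h) ^ (-(d : ℝ) / 2) * Real.exp (-‖z‖ ^ 2 / (2 * h))

/-- Convolution of two functions on `ℝ^d` w.r.t. Lebesgue measure. -/
noncomputable def conv (d : ℕ) (f g : EuclideanSpace ℝ (Fin d) → ℝ)
    (x : EuclideanSpace ℝ (Fin d)) : ℝ :=
  ∫ y, f (x - y) * g y

open Set

lemma mul_add_mul_le_add_mul {a b c : ℝ} (ha : a ∈ Icc (0 : ℝ) 1) (hb : b ∈ Icc (0 : ℝ) 1)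
    (hc : c ∈ Icc (0 : ℝ) 1) : a * b + b * c ≤ b + a * c := by
  -- b + a c - a b - b c = b (1 - a) (1 - c) + a c (1 - b)
  nlinarith [mul_nonneg (mul_nonneg hb.1 (sub_nonneg.2 ha.2)) (sub_nonneg.2 hc.2),
    mul_nonneg (mul_nonneg ha.1 hc.1) (sub_nonneg.2 hb.2)]

section Autocorrelation

variable {G : Type*} [AddCommGroup G] [MeasurableSpace G] {μ : Measure G} {u : G → ℝ}

noncomputable def autocorr (μ : Measure G) (u : G → ℝ) (v : G) : ℝ :=
  ∫ x, u x * u (x - v) ∂μ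

lemma autocorr_nonneg (hu : ∀ x, u x ∈ Icc (0 : ℝ) 1) (v : G) : 0 ≤ autocorr μ u v :=
  integral_nonneg fun x => mul_nonneg (hu x).1 (hu _).1

variable [MeasurableAdd₂ G] [MeasurableNeg G]

lemma integrable_mul_comp_sub (hu_meas : Measurable u) (hu : ∀ x, u x ∈ Icc (0 : ℝ) 1)
    (hu_int : Integrable u μ) (v : G) : Integrable (fun x => u x * u (x - v)) μ :=
  hu_int.mul_bdd (hu_meas.comp (measurable_sub_const v)).aestronglyMeasurable
    (ae_of_all _ fun x => by rw [Real.norm_of_nonneg (hu _).1]; exact (hu _).2)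

lemma autocorr_le_integral (hu_meas : Measurable u) (hu : ∀ x, u x ∈ Icc (0 : ℝ) 1)
    (hu_int : Integrable u μ) (v : G) : autocorr μ u v ≤ ∫ x, u x ∂μ :=
  integral_mono (integrable_mul_comp_sub hu_meas hu hu_int v) hu_int
    fun x => mul_le_of_le_one_right (hu x).1 (hu _).2

lemma stronglyMeasurable_autocorr [SFinite μ] (hu_meas : Measurable u) :
    StronglyMeasurable (autocorr μ u) :=
  ((hu_meas.comp measurable_snd).mul
    (hu_meas.comp (measurable_snd.sub measurable_fst))).stronglyMeasurable.integral_prod_right'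

lemma autocorr_add_autocorr_le [μ.IsAddRightInvariant] (hu_meas : Measurable u)
    (hu : ∀ x, u x ∈ Icc (0 : ℝ) 1) (hu_int : Integrable u μ) (v w : G) :
    autocorr μ u v + autocorr μ u w ≤ (∫ x, u x ∂μ) + autocorr μ u (v + w) := by
  have shift_w : autocorr μ u w = ∫ x, u (x - v) * u (x - v - w) ∂μ :=
    (integral_sub_right_eq_self (fun x => u x * u (x - w)) v).symm
  have shift_M : ∫ x, u x ∂μ = ∫ x, u (x - v) ∂μ := (integral_sub_right_eq_self u v).symm
  have int_v := integrable_mul_comp_sub hu_meas hu hu_int v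
  have int_w : Integrable (fun x => u (x - v) * u (x - v - w)) μ :=
    (integrable_mul_comp_sub hu_meas hu hu_int w).comp_sub_right v
  have int_vw := integrable_mul_comp_sub hu_meas hu hu_int (v + w)
  simp only [autocorr, ← sub_sub] at int_vw shift_w ⊢
  rw [shift_w, shift_M, ← integral_add int_v int_w,
    ← integral_add (hu_int.comp_sub_right v) int_vw]
  exact integral_mono (int_v.add int_w) ((hu_int.comp_sub_right v).add int_vw)
    fun x => mul_add_mul_le_add_mul (hu x) (hu (x - v)) (hu (x - v - w))

end Autocorrelation

section Gaussian

variable {d : ℕ}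

lemma gauss_nonneg {t : ℝ} (ht : 0 < t) (z : EuclideanSpace ℝ (Fin d)) : 0 ≤ gauss d t z := by
  unfold gauss
  have : 0 < 2 * Real.pi * t := by positivity
  positivity

lemma gauss_eq_mul_exp (t : ℝ) (z : EuclideanSpace ℝ (Fin d)) :
    gauss d t z = (2 * Real.pi * t) ^ (-(d : ℝ) / 2) * Real.exp (-(2 * t)⁻¹ * ‖z‖ ^ 2) := by
  unfold gauss
  congr 2
  ring

lemma integral_gauss {t : ℝ} (ht : 0 < t) : ∫ z, gauss d t z = 1 := by
  have h2t : 0 < 2 * Real.pi * t := by positivity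
  simp_rw [gauss_eq_mul_exp, integral_const_mul,
    GaussianFourier.integral_rexp_neg_mul_sq_norm (inv_pos.2 (by positivity : (0:ℝ) < 2 * t)),
    finrank_euclideanSpace_fin]
  rw [show Real.pi / (2 * t)⁻¹ = 2 * Real.pi * t by field_simp, ← Real.rpow_add h2t,
    neg_div, neg_add_cancel, Real.rpow_zero]

lemma integrable_gauss {t : ℝ} (ht : 0 < t) : Integrable (gauss d t) :=
  .of_integral_ne_zero (by simp [integral_gauss ht])

lemma gauss_sqrt_smul {t : ℝ} (ht : 0 < t) (w : EuclideanSpace ℝ (Fin d)) :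
    gauss d t (Real.sqrt t • w) = t ^ (-(d : ℝ) / 2) * gauss d 1 w := by
  have hnorm : ‖Real.sqrt t • w‖ ^ 2 = t * ‖w‖ ^ 2 := by
    rw [norm_smul, Real.norm_of_nonneg (Real.sqrt_nonneg t), mul_pow, Real.sq_sqrt ht.le]
  rw [gauss, gauss, hnorm, mul_one, mul_comm (2 * Real.pi) t, Real.mul_rpow ht.le (by positivity)]
  field_simp

lemma integral_gauss_mul_eq_integral_gauss_one_mul_comp_smul {t : ℝ} (ht : 0 < t)
    (F : EuclideanSpace ℝ (Fin d) → ℝ) :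
    ∫ z, gauss d t z * F z = ∫ w, gauss d 1 w * F (Real.sqrt t • w) := by
  have hscale := Measure.integral_comp_smul_of_nonneg volume (fun z => gauss d t z * F z)
    (Real.sqrt t) (hR := Real.sqrt_nonneg t)
  have hpow : (Real.sqrt t ^ d)⁻¹ = t ^ (-(d : ℝ) / 2) := by
    rw [Real.sqrt_eq_rpow, ← Real.rpow_natCast, ← Real.rpow_mul ht.le, ← Real.rpow_neg ht.le]
    ring_nf
  simp only [gauss_sqrt_smul ht, mul_assoc, integral_const_mul, finrank_euclideanSpace_fin,
    smul_eq_mul, hpow] at hscale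
  exact (mul_left_cancel₀ (by positivity) hscale).symm

end Gaussian

section HeatContent

variable {d : ℕ} {u : EuclideanSpace ℝ (Fin d) → ℝ}

lemma conv_eq_integral_mul_comp_sub (f g : EuclideanSpace ℝ (Fin d) → ℝ)
    (x : EuclideanSpace ℝ (Fin d)) : conv d f g x = ∫ z, f z * g (x - z) := by
  rw [conv, ← integral_sub_left_eq_self (fun z => f z * g (x - z)) volume x]
  simp

lemma integral_mul_conv_eq_integral_mul_autocorr {K : EuclideanSpace ℝ (Fin d) → ℝ}
    (hK : Integrable K) (hu_meas : Measurable u) (hu : ∀ x, u x ∈ Icc (0 : ℝ) 1)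
    (hu_int : Integrable u) :
    ∫ x, u x * conv d K u x = ∫ z, K z * autocorr volume u z := by
  have hF : Integrable (fun p : EuclideanSpace ℝ (Fin d) × EuclideanSpace ℝ (Fin d) =>
      u p.1 * K p.2 * u (p.1 - p.2)) (volume.prod volume) :=
    (hu_int.mul_prod hK).mul_bdd (hu_meas.comp measurable_sub).aestronglyMeasurable
      (ae_of_all _ fun p => by rw [Real.norm_of_nonneg (hu _).1]; exact (hu _).2)
  calc ∫ x, u x * conv d K u x = ∫ x, ∫ z, u x * K z * u (x - z) := by
        simp_rw [conv_eq_integral_mul_comp_sub, ← integral_const_mul, mul_assoc]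
    _ = ∫ z, ∫ x, u x * K z * u (x - z) := integral_integral_swap hF
    _ = ∫ z, K z * autocorr volume u z := by
        simp_rw [autocorr, ← integral_const_mul, mul_assoc, mul_left_comm (u _)]

lemma integral_mul_conv_gauss {t : ℝ} (ht : 0 < t) (hu_meas : Measurable u)
    (hu : ∀ x, u x ∈ Icc (0 : ℝ) 1) (hu_int : Integrable u) :
    ∫ x, u x * conv d (gauss d t) u x = ∫ w, gauss d 1 w * autocorr volume u (Real.sqrt t • w) := by
  rw [integral_mul_conv_eq_integral_mul_autocorr (integrable_gauss ht) hu_meas hu hu_int,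
    integral_gauss_mul_eq_integral_gauss_one_mul_comp_smul ht]

lemma integral_gauss_mul_autocorr_add_le (hu_meas : Measurable u)
    (hu : ∀ x, u x ∈ Icc (0 : ℝ) 1) (hu_int : Integrable u) (s s' : ℝ) :
    (∫ w, gauss d 1 w * autocorr volume u (s • w)) + ∫ w, gauss d 1 w * autocorr volume u (s' • w)
      ≤ (∫ x, u x) + ∫ w, gauss d 1 w * autocorr volume u ((s + s') • w) := by
  have hint (r : ℝ) : Integrable (fun w => gauss d 1 w * autocorr volume u (r • w)) :=
    (integrable_gauss one_pos).mul_bdd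
      ((stronglyMeasurable_autocorr hu_meas).measurable.comp
        (measurable_const_smul r)).aestronglyMeasurable
      (ae_of_all _ fun w => by
        rw [Real.norm_of_nonneg (autocorr_nonneg hu _)]
        exact autocorr_le_integral hu_meas hu hu_int _)
  have hM : ∫ x, u x = ∫ w, gauss d 1 w * ∫ x, u x := by
    rw [integral_mul_const, integral_gauss one_pos, one_mul]
  rw [hM, ← integral_add (hint s) (hint s'),
    ← integral_add ((integrable_gauss one_pos).mul_const _) (hint (s + s'))]
  refine integral_mono ((hint s).add (hint s'))
    (((integrable_gauss one_pos).mul_const _).add (hint (s + s'))) fun w => ?_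
  simp only [add_smul, ← mul_add]
  exact mul_le_mul_of_nonneg_left (autocorr_add_autocorr_le hu_meas hu hu_int _ _)
    (gauss_nonneg one_pos w)

end HeatContent

theorem stmt_11_general (d : ℕ) (h h' : ℝ) (hh : 0 < h) (hh' : 0 < h')
    (h₀ : ℝ) (hh₀ : h₀ = (Real.sqrt h + Real.sqrt h') ^ 2)
    (u : EuclideanSpace ℝ (Fin d) → ℝ)
    (hu_meas : Measurable u) (hu_range : ∀ x, u x ∈ Set.Icc (0 : ℝ) 1)
    (hu_int : Integrable u) :
    (∫ x, u x) - (∫ x, u x * conv d (gauss d h₀) u x)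
      ≤ ((∫ x, u x) - ∫ x, u x * conv d (gauss d h) u x)
        + ((∫ x, u x) - ∫ x, u x * conv d (gauss d h') u x) := by
  have hsqrt : Real.sqrt h₀ = Real.sqrt h + Real.sqrt h' := by
    rw [hh₀, Real.sqrt_sq (by positivity)]
  have hh₀_pos : 0 < h₀ := by
    rw [← Real.sqrt_pos, hsqrt]
    positivity
  rw [integral_mul_conv_gauss hh₀_pos hu_meas hu_range hu_int, hsqrt,
    integral_mul_conv_gauss hh hu_meas hu_range hu_int,
    integral_mul_conv_gauss hh' hu_meas hu_range hu_int]
  linarith [integral_gauss_mul_autocorr_add_le hu_meas hu_range hu_int (Real.sqrt h) (Real.sqrt h')]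

theorem stmt_11 (d : ℕ) (hd : 1 ≤ d) (h h' : ℝ) (hh : 0 < h) (hh' : 0 < h')
    (h₀ : ℝ) (hh₀ : h₀ = (Real.sqrt h + Real.sqrt h') ^ 2)
    (u : EuclideanSpace ℝ (Fin d) → ℝ)
    (hu_meas : Measurable u) (hu_range : ∀ x, u x ∈ Set.Icc (0 : ℝ) 1)
    (hu_int : Integrable u) :
    (∫ x, u x) - (∫ x, u x * conv d (gauss d h₀) u x)
      ≤ ((∫ x, u x) - ∫ x, u x * conv d (gauss d h) u x)
        + ((∫ x, u x) - ∫ x, u x * conv d (gauss d h') u x) :=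
  stmt_11_general d h h' hh hh' h₀ hh₀ u hu_meas hu_range hu_int
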